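/- If the class Min = {X ∈ 2^ω : X is of minimal Turing degree} has Hausdorff dimension r ≤ 1, then every maximal antichain of Turing degrees has Hausdorff dimension at least r. -/

import Mathlib

open scoped ENNReal

attribute [local instance] Classical.propDecidable

/-- Cantor space `2^ω`. -/
abbrev Cantor := ℕ → Bool

/-- The length-`n` initial segment `X↾n` of `X ∈ 2^ω`, as a finite binary string. -/
def seg (X : Cantor) (n : ℕ) : List Bool := (List.range n).map X

/-- `σ ≺ X` : the finite string `σ` is an initial segment of `X`. -/
def PrefixOfSeq (σ : List Bool) (X : Cantor) : Prop := seg X σ.length = σ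

/-- The basic clopen set `[σ]` of all infinite sequences extending `σ`. -/
def cyl (σ : List Bool) : Set Cantor := {X | PrefixOfSeq σ X}

/-- Partial recursive functions relative to a (total) oracle `O : ℕ → ℕ`:
the oracle version of `Nat.Partrec`. -/
inductive RecursiveInOracle (O : ℕ → ℕ) : (ℕ →. ℕ) → Prop
  | oracle : RecursiveInOracle O (fun n => Part.some (O n))
  | zero : RecursiveInOracle O (pure 0)
  | succ : RecursiveInOracle O Nat.succ
  | left : RecursiveInOracle O ↑fun n : ℕ => n.unpair.1
  | right : RecursiveInOracle O ↑fun n : ℕ => n.unpair.2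
  | pair {f g} : RecursiveInOracle O f → RecursiveInOracle O g →
      RecursiveInOracle O fun n => Nat.pair <$> f n <*> g n
  | comp {f g} : RecursiveInOracle O f → RecursiveInOracle O g →
      RecursiveInOracle O fun n => g n >>= f
  | prec {f g} : RecursiveInOracle O f → RecursiveInOracle O g →
      RecursiveInOracle O (Nat.unpaired fun a n =>
        n.rec (f a) fun y IH => do let i ← IH; g (Nat.pair a (Nat.pair y i)))
  | rfind {f} : RecursiveInOracle O f →
      RecursiveInOracle O fun a => Nat.rfind fun n => (fun m => m = 0) <$> f (Nat.pair a n)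

/-- A (total) function between coded types is recursive in the oracle `O`. -/
def RecIn {α β : Type} [Primcodable α] [Primcodable β] (O : ℕ → ℕ) (f : α → β) : Prop :=
  RecursiveInOracle O fun n =>
    (Part.ofOption (Encodable.decode (α := α) n)).bind fun a => Part.some (Encodable.encode (f a))

/-- A set `X ∈ 2^ω` viewed as a total oracle. -/
def oracleOf (X : Cantor) : ℕ → ℕ := fun n => cond (X n) 1 0

/-- A function between coded types viewed as a total oracle on `ℕ`. -/
def oracleFn {α β : Type} [Primcodable α] [Primcodable β] (f : α → β) : ℕ → ℕ :=
  fun n => Encodable.encode ((Encodable.decode (α := α) n).map f)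

/-- Turing reducibility `X ≤_T Y` between elements of `2^ω`. -/
def TRed (X Y : Cantor) : Prop := RecIn (oracleOf Y) X

/-- Turing equivalence `X ≡_T Y`. -/
def TEquiv (X Y : Cantor) : Prop := TRed X Y ∧ TRed Y X

/-- The Turing degree of `Z`, as a set of reals. -/
def degCl (Z : Cantor) : Set Cantor := {Y | TEquiv Y Z}

/-- Many-one reducibility `X ≤_m Y` between subsets of `ω` (as elements of `2^ω`). -/
def ManyOneRed (X Y : Cantor) : Prop := ∃ g : ℕ → ℕ, Computable g ∧ ∀ n, X n = Y (g n)

/-- The recursive join `A ⊕ B`. -/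
def join (A B : Cantor) : Cantor := fun n => if n % 2 = 0 then A (n / 2) else B (n / 2)

/-- `X` is of minimal Turing degree. -/
def MinimalDeg (X : Cantor) : Prop :=
  ¬Computable X ∧ ∀ Y : Cantor, TRed Y X → Computable Y ∨ TRed X Y

/-- `B` is a minimal cover of the countable class `S`: `B` strictly bounds every member of `S`,
and everything below `B` is either below some member of `S` or joins with one above `B`. -/
def MinimalCoverOf (B : Cantor) (S : Set Cantor) : Prop :=
  (∀ A ∈ S, TRed A B ∧ ¬TRed B A) ∧
  ∀ C : Cantor, TRed C B → ∃ A ∈ S, TRed C A ∨ TRed B (join A C)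

/-- `R` is of hyperimmune-free degree: every function it computes is dominated by a
computable function. -/
def HypImmFree (R : Cantor) : Prop :=
  ∀ f : ℕ → ℕ, RecIn (oracleOf R) f → ∃ g : ℕ → ℕ, Computable g ∧ ∀ n, f n ≤ g n

/-- `d` is a supermartingale. -/
def IsSupermartingale (d : List Bool → ℝ) : Prop :=
  (∀ σ, 0 ≤ d σ) ∧ ∀ σ, d (σ ++ [false]) + d (σ ++ [true]) ≤ 2 * d σ

/-- `d` is a martingale. -/
def IsMartingale (d : List Bool → ℝ) : Prop :=
  (∀ σ, 0 ≤ d σ) ∧ ∀ σ, d (σ ++ [false]) + d (σ ++ [true]) = 2 * d σ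

/-- `d` is lower semicomputable (r.e.) relative to oracle `O`: it is the monotone limit of a
uniformly `O`-recursive sequence of rationals. -/
def LowerSemicomputableIn (O : ℕ → ℕ) (d : List Bool → ℝ) : Prop :=
  ∃ q : List Bool × ℕ → ℚ, RecIn O q ∧ (∀ σ, Monotone fun n => q (σ, n)) ∧
    ∀ σ, Filter.Tendsto (fun n => (q (σ, n) : ℝ)) Filter.atTop (nhds (d σ))

/-- `d` is lower semicomputable (an r.e. supermartingale value function). -/
def LowerSemicomputable (d : List Bool → ℝ) : Prop :=
  ∃ q : List Bool × ℕ → ℚ, Computable q ∧ (∀ σ, Monotone fun n => q (σ, n)) ∧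
    ∀ σ, Filter.Tendsto (fun n => (q (σ, n) : ℝ)) Filter.atTop (nhds (d σ))

/-- `d` `s`-succeeds on `X`: `limsup_n d(X↾n)/2^{(1-s)n} = ∞`
(equivalently, the sequence is unbounded). -/
def Succeeds (d : List Bool → ℝ) (s : ℚ) (X : Cantor) : Prop :=
  ∀ C : ℝ, ∃ n : ℕ, C * (2 : ℝ) ^ ((1 - (s : ℝ)) * n) ≤ d (seg X n)

/-- `d` strongly `s`-succeeds on `X`: `liminf_n d(X↾n)/2^{(1-s)n} = ∞`. -/
def SucceedsStrongly (d : List Bool → ℝ) (s : ℚ) (X : Cantor) : Prop :=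
  ∀ C : ℝ, ∃ N : ℕ, ∀ n ≥ N, C * (2 : ℝ) ^ ((1 - (s : ℝ)) * n) ≤ d (seg X n)

/-- Generic dimension notion: the infimum of all `s ∈ ℚ ∩ [0,1]` such that some supermartingale
satisfying `P` succeeds (in the sense of `Succ`) on every member of `A` (with value `1` if there
is no such `s`). -/
noncomputable def dimVia (P : (List Bool → ℝ) → Prop)
    (Succ : (List Bool → ℝ) → ℚ → Cantor → Prop) (A : Set Cantor) : ℝ≥0∞ :=
  sInf ({1} ∪ {x : ℝ≥0∞ | ∃ s : ℚ, 0 ≤ s ∧ s ≤ 1 ∧ x = ENNReal.ofReal (s : ℝ) ∧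
    ∃ d, IsSupermartingale d ∧ P d ∧ ∀ X ∈ A, Succ d s X})

/-- Effective Hausdorff dimension of a class (Lutz). -/
noncomputable def effDim (A : Set Cantor) : ℝ≥0∞ := dimVia LowerSemicomputable Succeeds A

/-- Effective Hausdorff dimension relative to oracle `O`. -/
noncomputable def effDimIn (O : ℕ → ℕ) (A : Set Cantor) : ℝ≥0∞ :=
  dimVia (LowerSemicomputableIn O) Succeeds A

/-- Effective packing dimension of a class. -/
noncomputable def effPDim (A : Set Cantor) : ℝ≥0∞ := dimVia LowerSemicomputable SucceedsStrongly A

/-- Effective packing dimension relative to oracle `O`. -/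
noncomputable def effPDimIn (O : ℕ → ℕ) (A : Set Cantor) : ℝ≥0∞ :=
  dimVia (LowerSemicomputableIn O) SucceedsStrongly A

/-- (Classical) Hausdorff dimension of a subset of `2^ω`, via the point-to-set principle:
the infimum over all oracles `Z` of the effective-in-`Z` Hausdorff dimension. -/
noncomputable def hausdorffDim (A : Set Cantor) : ℝ≥0∞ := ⨅ Z : Cantor, effDimIn (oracleOf Z) A

/-- (Classical) packing dimension of a subset of `2^ω`, via the point-to-set principle. -/
noncomputable def packingDim (A : Set Cantor) : ℝ≥0∞ := ⨅ Z : Cantor, effPDimIn (oracleOf Z) A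

/-- The canonical enumeration `n ↦ D_n` of finite subsets of `ω`: `D_n` is the set of
positions of 1-bits in the binary expansion of `n`. -/
def Dfin (n : ℕ) : Finset ℕ := (Finset.range n).filter fun i => n.testBit i = true

/-- `A` is recursively traceable. -/
def RecTraceable (A : Cantor) : Prop :=
  ∃ b : ℕ → ℕ, Computable b ∧ ∀ f : ℕ → ℕ, RecIn (oracleOf A) f →
    ∃ g : ℕ → ℕ, Computable g ∧ ∀ n, (Dfin (g n)).card ≤ b n ∧ f n ∈ Dfin (g n)

/-- A function tree: `T(σi)` properly extends `T(σ)`, and `T(σ0)`, `T(σ1)` are incomparable. -/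
structure FunTree where
  f : List Bool → List Bool
  extend : ∀ σ (i : Bool), f σ <+: f (σ ++ [i]) ∧ (f σ).length < (f (σ ++ [i])).length
  split : ∀ σ, ¬ f (σ ++ [false]) <+: f (σ ++ [true]) ∧ ¬ f (σ ++ [true]) <+: f (σ ++ [false])

/-- `[T]`, the set of infinite paths through the function tree `T`. -/
def Paths (T : FunTree) : Set Cantor :=
  {X | ∃ Y : Cantor, ∀ n, PrefixOfSeq (T.f (seg Y n)) X}

/-- `T ≤_T Y` for a function tree `T` and a real `Y`. -/
def TreeRedToReal (T : FunTree) (Y : Cantor) : Prop := RecIn (oracleOf Y) T.f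

/-- `Y ≤_T T` for a real `Y` and a function tree `T` (the tree used as an oracle). -/
def RealRedToTree (Y : Cantor) (T : FunTree) : Prop := RecIn (oracleFn T.f) Y

/-- `S ≤_T T` between function trees. -/
def TreeRedToTree (S T : FunTree) : Prop := RecIn (oracleFn T.f) S.f

/-- `T` is recursively pointed: every path of `T` computes `T`. -/
def RecPointed (T : FunTree) : Prop := ∀ X ∈ Paths T, TreeRedToReal T X

/-- The binary value of a string (read most-significant-bit first); strings of equal
length are lexicographically ordered exactly as their values. -/
def natOfStr (σ : List Bool) : ℕ := σ.foldl (fun a b => 2 * a + cond b 1 0) 0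

/-- The length-`len` binary string with value `k`. -/
def strOfNat (len k : ℕ) : List Bool := (List.range len).map fun i => k.testBit (len - 1 - i)

/-- `l(σ) = Σ_{|τ|=|σ|, τ <_L σ} ν([τ])`, computed via the value correspondence between the
lexicographic order on strings of equal length and the numeric order of their values. -/
noncomputable def lfun (ν : MeasureTheory.Measure Cantor) (σ : List Bool) : ℝ :=
  ∑ k ∈ Finset.range (natOfStr σ), (ν (cyl (strOfNat σ.length k))).toReal

/-- `r(σ) = l(σ) + ν([σ])`. -/
noncomputable def rfun (ν : MeasureTheory.Measure Cantor) (σ : List Bool) : ℝ :=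
  lfun ν σ + (ν (cyl σ)).toReal

/-- `0.A`: the real number in `[0,1]` with binary expansion `A`. -/
noncomputable def realOf (A : Cantor) : ℝ := ∑' n : ℕ, cond (A n) ((2 : ℝ)⁻¹ ^ (n + 1)) 0

/-- The weight `2^{-|σ|}` of an (optional) string, for measuring Martin-Löf tests. -/
noncomputable def testWeight : Option (List Bool) → ℝ≥0∞
  | none => 0
  | some σ => (2 : ℝ≥0∞)⁻¹ ^ σ.length

/-- `V` is a Martin-Löf test: a uniformly computable enumeration whose `n`-th level has
total weight at most `2^{-n}`. -/
def MLTest (V : ℕ × ℕ → Option (List Bool)) : Prop :=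
  Computable V ∧ ∀ n, (∑' k : ℕ, testWeight (V (n, k))) ≤ (2 : ℝ≥0∞)⁻¹ ^ n

/-- `X` is covered by the test `V` (belongs to every level). -/
def MLCovered (V : ℕ × ℕ → Option (List Bool)) (X : Cantor) : Prop :=
  ∀ n, ∃ k σ, V (n, k) = some σ ∧ PrefixOfSeq σ X

/-- `X` is 1-random (Martin-Löf random). -/
def MLRandom (X : Cantor) : Prop := ∀ V, MLTest V → ¬MLCovered V X

/-- An antichain of Turing degrees (containing no computable set, closed under Turing
equivalence, with Turing-inequivalent members pairwise incomparable). -/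
def IsAntichainDeg (B : Set Cantor) : Prop :=
  (∀ X ∈ B, ¬Computable X) ∧ (∀ X ∈ B, ∀ Y, TEquiv Y X → Y ∈ B) ∧
  ∀ X ∈ B, ∀ Y ∈ B, ¬TEquiv X Y → ¬TRed X Y ∧ ¬TRed Y X

/-- A maximal antichain of Turing degrees. -/
def MaximalAntichainDeg (B : Set Cantor) : Prop :=
  IsAntichainDeg B ∧ ∀ Z ∉ B, ¬IsAntichainDeg (B ∪ degCl Z)

/-- A chain of Turing degrees. -/
def IsChainDeg (A : Set Cantor) : Prop :=
  (∀ X ∈ A, ∀ Y, TEquiv Y X → Y ∈ A) ∧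
  ∀ X ∈ A, ∀ Y ∈ A, ¬TEquiv X Y → TRed X Y ∨ TRed Y X

/-- A maximal chain of Turing degrees. -/
def MaximalChainDeg (A : Set Cantor) : Prop :=
  IsChainDeg A ∧ ∀ Z ∉ A, ¬IsChainDeg (A ∪ degCl Z)

/-- The first uncountable ordinal `ω₁`. -/
noncomputable def omega1 : Ordinal := (Cardinal.aleph 1).ord

/-!
Let `d` be a supermartingale `s`-succeeding on every member of the maximal antichain `B`, and
let `s < s'`. A set `X` of minimal degree lies below some `Y ∈ B`: otherwise, by minimality, the
degree of `X` would be incomparable with all of `B`. Writing `Y` on every `j`-th position and `X`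
on the others gives a set `E ≡_T Y`, so `E ∈ B` and `d` succeeds on `E`. Averaging `d` over the
unknown `Y`-bits yields a supermartingale on `X` which, after `(j - 1) t` bits of `X`, has lost
at most the factor `2 ^ t`; for `j` large this is absorbed by `s < s'`, so it `s'`-succeeds on
every set of minimal degree. Since every function is lower semicomputable relative to some
oracle, this bounds the Hausdorff dimension of the minimal degrees by `s'`.
-/

section Oracle

variable {O O' : ℕ → ℕ}

theorem RecursiveInOracle.of_partrec {f : ℕ →. ℕ} (h : Nat.Partrec f) :
    RecursiveInOracle O f := by
  induction h with
  | zero => exact .zero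
  | succ => exact .succ
  | left => exact .left
  | right => exact .right
  | pair _ _ ih₁ ih₂ => exact .pair ih₁ ih₂
  | comp _ _ ih₁ ih₂ => exact .comp ih₁ ih₂
  | prec _ _ ih₁ ih₂ => exact .prec ih₁ ih₂
  | rfind _ ih => exact .rfind ih

theorem RecursiveInOracle.trans {f : ℕ →. ℕ} (h : RecursiveInOracle O f)
    (hO : RecursiveInOracle O' fun n => Part.some (O n)) : RecursiveInOracle O' f := by
  induction h with
  | oracle => exact hO
  | zero => exact .zero
  | succ => exact .succ
  | left => exact .left
  | right => exact .right
  | pair _ _ ih₁ ih₂ => exact .pair ih₁ ih₂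
  | comp _ _ ih₁ ih₂ => exact .comp ih₁ ih₂
  | prec _ _ ih₁ ih₂ => exact .prec ih₁ ih₂
  | rfind _ ih => exact .rfind ih

theorem RecursiveInOracle.partrec {f : ℕ →. ℕ} (h : RecursiveInOracle O f)
    (hO : Nat.Partrec fun n => Part.some (O n)) : Nat.Partrec f := by
  induction h with
  | oracle => exact hO
  | zero => exact .zero
  | succ => exact .succ
  | left => exact .left
  | right => exact .right
  | pair _ _ ih₁ ih₂ => exact .pair ih₁ ih₂
  | comp _ _ ih₁ ih₂ => exact .comp ih₁ ih₂
  | prec _ _ ih₁ ih₂ => exact .prec ih₁ ih₂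
  | rfind _ ih => exact .rfind ih

theorem RecursiveInOracle.of_eq {f g : ℕ →. ℕ} (hf : RecursiveInOracle O f)
    (h : ∀ n, f n = g n) : RecursiveInOracle O g :=
  funext h ▸ hf

theorem Computable.natPartrec_some {g : ℕ → ℕ} (hg : Computable g) :
    Nat.Partrec fun n => Part.some (g n) :=
  Partrec.nat_iff.1 hg

theorem recIn_iff_recursiveInOracle {X : Cantor} :
    RecIn O X ↔ RecursiveInOracle O fun n => Part.some (oracleOf X n) := by
  have h : (fun n => (Part.ofOption (Encodable.decode (α := ℕ) n)).bind
      fun a => Part.some (Encodable.encode (X a))) = fun n => Part.some (oracleOf X n) := by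
    funext n
    simp only [oracleOf, Encodable.decode, Part.ofOption, Part.bind_some]
    cases X n <;> rfl
  rw [RecIn, h]

theorem TRed.refl (X : Cantor) : TRed X X :=
  recIn_iff_recursiveInOracle.2 .oracle

theorem TRed.trans {X Y Z : Cantor} (hXY : TRed X Y) (hYZ : TRed Y Z) : TRed X Z := by
  rw [TRed, recIn_iff_recursiveInOracle] at *
  exact hXY.trans hYZ

theorem TEquiv.symm {X Y : Cantor} (h : TEquiv X Y) : TEquiv Y X := ⟨h.2, h.1⟩

theorem TEquiv.trans {X Y Z : Cantor} (hXY : TEquiv X Y) (hYZ : TEquiv Y Z) : TEquiv X Z :=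
  ⟨hXY.1.trans hYZ.1, hYZ.2.trans hXY.2⟩

theorem TRed.computable {X Y : Cantor} (h : TRed X Y) (hY : Computable Y) : Computable X := by
  have hO : Computable (oracleOf Y) := hY.cond (.const 1) (.const 0)
  have hX := (recIn_iff_recursiveInOracle.1 h).partrec hO.natPartrec_some
  refine hX.of_eq fun n => ?_
  simp only [oracleOf, Encodable.decode, Part.ofOption, Part.bind_some, PFun.coe_val, Part.map_some]
  cases X n <;> rfl

theorem RecIn.comp_computable {X : Cantor} {g : ℕ → ℕ} (hX : RecIn O X) (hg : Computable g) :
    RecIn O fun n => X (g n) := by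
  rw [recIn_iff_recursiveInOracle] at hX ⊢
  exact (RecursiveInOracle.comp hX (.of_partrec hg.natPartrec_some)).of_eq fun n => by
    simp [oracleOf]

theorem RecIn.cond {p X Y : Cantor} (hp : Computable p) (hX : RecIn O X) (hY : RecIn O Y) :
    RecIn O fun n => bif p n then X n else Y n := by
  rw [recIn_iff_recursiveInOracle] at hX hY ⊢
  have hid : RecursiveInOracle O fun n => Part.some n := .of_partrec Computable.id.natPartrec_some
  -- on `⟨⟨n, X n⟩, Y n⟩`, select the component indicated by `p n`
  let select : ℕ → ℕ := fun m =>
    bif p m.unpair.1.unpair.1 then m.unpair.1.unpair.2 else m.unpair.2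
  have hselect : Computable select :=
    (hp.comp (Computable.fst.comp (Computable.unpair.comp (Computable.fst.comp
      Computable.unpair)))).cond
      (Computable.snd.comp (Computable.unpair.comp (Computable.fst.comp Computable.unpair)))
      (Computable.snd.comp Computable.unpair)
  have h := RecursiveInOracle.comp (.of_partrec hselect.natPartrec_some) ((hid.pair hX).pair hY)
  refine h.of_eq fun n => ?_
  simp [Seq.seq, select, oracleOf]
  cases p n <;> simp

end Oracle

section Graph

def graphOf (F : ℕ → ℕ) : Cantor := fun m => F m.unpair.1 == m.unpair.2

theorem recursiveInOracle_graphOf (F : ℕ → ℕ) :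
    RecursiveInOracle (oracleOf (graphOf F)) fun n => Part.some (F n) := by
  have hsub : Computable fun m : ℕ => 1 - m := (Primrec.nat_sub.comp (.const 1) .id).to_comp
  have hneg : RecursiveInOracle (oracleOf (graphOf F))
      fun m => Part.some (1 - oracleOf (graphOf F) m) :=
    (RecursiveInOracle.comp (.of_partrec hsub.natPartrec_some) .oracle).of_eq fun n => by simp
  refine hneg.rfind.of_eq fun a => ?_
  refine Part.eq_some_iff.2 (Nat.mem_rfind.2 ⟨?_, fun {k} hk => ?_⟩)
  · simp [oracleOf, graphOf]
  · have hne : (F a == k) = false := by simp; omega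
    simp [oracleOf, graphOf, hne]

theorem exists_recIn {α β : Type} [Primcodable α] [Primcodable β] (q : α → β) :
    ∃ Z : Cantor, RecIn (oracleOf Z) q := by
  refine ⟨graphOf (oracleFn q), ?_⟩
  have h := RecursiveInOracle.comp (.of_partrec Nat.Partrec.ppred)
    (recursiveInOracle_graphOf (oracleFn q))
  refine h.of_eq fun n => ?_
  rcases hn : Encodable.decode (α := α) n with _ | a <;> simp [oracleFn, hn, Part.ofOption]

end Graph

section Antichain

theorem IsAntichainDeg.union_degCl {B : Set Cantor} (hB : IsAntichainDeg B) {X : Cantor}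
    (hX : MinimalDeg X) (hXB : ∀ Y ∈ B, ¬TRed X Y) : IsAntichainDeg (B ∪ degCl X) := by
  have incomparable : ∀ U ∈ B, ∀ V ∈ degCl X, ¬TRed U V ∧ ¬TRed V U := fun U hU V hV =>
    ⟨fun hUV => (hX.2 U (hUV.trans hV.1)).elim (hB.1 U hU) (hXB U hU),
      fun hVU => hXB U hU (hV.2.trans hVU)⟩
  refine ⟨?_, ?_, ?_⟩
  · rintro W (hW | hW)
    · exact hB.1 W hW
    · exact fun hc => hX.1 (hW.2.computable hc)
  · rintro W (hW | hW) V hVW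
    · exact .inl (hB.2.1 W hW V hVW)
    · exact .inr (hVW.trans hW)
  · rintro U (hU | hU) V (hV | hV) hUV
    · exact hB.2.2 U hU V hV hUV
    · exact incomparable U hU V hV
    · exact (incomparable V hV U hU).symm
    · exact absurd (hU.trans hV.symm) hUV

theorem MaximalAntichainDeg.exists_tRed_of_minimalDeg {B : Set Cantor}
    (hB : MaximalAntichainDeg B) {X : Cantor} (hX : MinimalDeg X) : ∃ Y ∈ B, TRed X Y := by
  by_cases hXB : X ∈ B
  · exact ⟨X, hXB, .refl X⟩
  by_contra! h
  exact hB.2 X hXB (hB.1.union_degCl hX h)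

end Antichain

section Dyadic

noncomputable def dyadicFloor (x : ℝ) (n : ℕ) : ℚ := ⌊x * 2 ^ n⌋ / 2 ^ n

theorem monotone_dyadicFloor (x : ℝ) : Monotone (dyadicFloor x) := by
  refine monotone_nat_of_le_succ fun n => ?_
  have h : 2 * ⌊x * 2 ^ n⌋ ≤ ⌊x * 2 ^ (n + 1)⌋ := by
    rw [Int.le_floor, pow_succ]
    push_cast
    linarith [Int.floor_le (x * 2 ^ n)]
  calc dyadicFloor x n = ((2 * ⌊x * 2 ^ n⌋ : ℤ) : ℚ) / 2 ^ (n + 1) := by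
        rw [dyadicFloor, pow_succ]; push_cast; field_simp
    _ ≤ dyadicFloor x (n + 1) := by
        rw [dyadicFloor]; gcongr

theorem dyadicFloor_mem_Ioc (x : ℝ) (n : ℕ) :
    (dyadicFloor x n : ℝ) ∈ Set.Ioc (x - (2 ^ n)⁻¹) x := by
  have hpos : (0 : ℝ) < 2 ^ n := by positivity
  simp only [dyadicFloor, Rat.cast_div, Rat.cast_intCast, Rat.cast_pow, Rat.cast_ofNat,
    Set.mem_Ioc, div_le_iff₀ hpos, lt_div_iff₀ hpos]
  constructor
  · nlinarith [Int.sub_one_lt_floor (x * 2 ^ n), mul_inv_cancel₀ hpos.ne']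
  · exact Int.floor_le _

theorem tendsto_dyadicFloor (x : ℝ) :
    Filter.Tendsto (fun n => (dyadicFloor x n : ℝ)) Filter.atTop (nhds x) := by
  have h : Filter.Tendsto (fun n : ℕ => x - (2 ^ n)⁻¹) Filter.atTop (nhds x) := by
    simpa using tendsto_const_nhds.sub (tendsto_inv_atTop_zero.comp
      (tendsto_pow_atTop_atTop_of_one_lt (one_lt_two (α := ℝ))))
  exact tendsto_of_tendsto_of_tendsto_of_le_of_le h tendsto_const_nhds
    (fun n => (dyadicFloor_mem_Ioc x n).1.le) fun n => (dyadicFloor_mem_Ioc x n).2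

theorem exists_lowerSemicomputableIn (d : List Bool → ℝ) :
    ∃ Z : Cantor, LowerSemicomputableIn (oracleOf Z) d := by
  obtain ⟨Z, hZ⟩ := exists_recIn fun p : List Bool × ℕ => dyadicFloor (d p.1) p.2
  exact ⟨Z, _, hZ, fun σ => monotone_dyadicFloor (d σ), fun σ => tendsto_dyadicFloor (d σ)⟩

end Dyadic

section SparseJoin

variable {j : ℕ}

def sparseJoin (j : ℕ) (X Y : Cantor) : Cantor :=
  fun p => bif p % j == j - 1 then Y (p / j) else X (p - p / j)

theorem sparseJoin_apply_of_mod_eq {X Y : Cantor} {p : ℕ} (h : p % j = j - 1) :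
    sparseJoin j X Y p = Y (p / j) := by
  simp [sparseJoin, h]

theorem sparseJoin_apply_of_mod_ne {X Y : Cantor} {p : ℕ} (h : p % j ≠ j - 1) :
    sparseJoin j X Y p = X (p - p / j) := by
  have hne : (p % j == j - 1) = false := by simp [h]
  simp [sparseJoin, hne]

theorem tRed_sparseJoin {X Y : Cantor} (hXY : TRed X Y) : TRed (sparseJoin j X Y) Y :=
  RecIn.cond (Primrec.beq.comp (Primrec.nat_mod.comp .id (.const j)) (.const (j - 1))).to_comp
    ((TRed.refl Y).comp_computable (Primrec.nat_div.comp .id (.const j)).to_comp)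
    (hXY.comp_computable
      (Primrec.nat_sub.comp .id (Primrec.nat_div.comp .id (.const j))).to_comp)

theorem sparseJoin_apply_sparse (hj : 0 < j) (X Y : Cantor) (k : ℕ) :
    sparseJoin j X Y (j * k + (j - 1)) = Y k := by
  have hlt : j - 1 < j := by omega
  rw [sparseJoin_apply_of_mod_eq (by rw [Nat.mul_add_mod, Nat.mod_eq_of_lt hlt]),
    Nat.mul_add_div hj, Nat.div_eq_of_lt hlt, add_zero]

theorem tRed_sparseJoin_right (hj : 0 < j) (X Y : Cantor) : TRed Y (sparseJoin j X Y) := by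
  have h := (TRed.refl (sparseJoin j X Y)).comp_computable
    (Primrec.nat_add.comp (Primrec.nat_mul.comp (.const j) .id) (.const (j - 1))).to_comp
  simp only [sparseJoin_apply_sparse hj, id] at h
  exact h

theorem IsAntichainDeg.sparseJoin_mem {B : Set Cantor} (hB : IsAntichainDeg B) (hj : 0 < j)
    {X Y : Cantor} (hY : Y ∈ B) (hXY : TRed X Y) : sparseJoin j X Y ∈ B :=
  hB.2.1 Y hY _ ⟨tRed_sparseJoin hXY, tRed_sparseJoin_right hj X Y⟩

end SparseJoin

section Seg

theorem seg_length (X : Cantor) (n : ℕ) : (seg X n).length = n := by simp [seg]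

theorem seg_succ (X : Cantor) (n : ℕ) : seg X (n + 1) = seg X n ++ [X n] := by
  simp [seg, List.range_succ]

theorem getD_seg {X : Cantor} {n i : ℕ} (h : i < n) : (seg X n).getD i false = X i := by
  simp [seg, h]

theorem seg_congr {X X' : Cantor} {n : ℕ} (h : ∀ i < n, X i = X' i) : seg X n = seg X' n :=
  List.map_congr_left fun i hi => h i (List.mem_range.1 hi)

end Seg

section Positions

variable {j : ℕ}

theorem add_div_pred_eq (hj : 2 ≤ j) (n : ℕ) :
    n + n / (j - 1) = j * (n / (j - 1)) + n % (j - 1) := by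
  obtain ⟨k, rfl⟩ : ∃ k, j = k + 2 := ⟨j - 2, by omega⟩
  have h := Nat.div_add_mod n (k + 1)
  simp only [show k + 2 - 1 = k + 1 by omega] at h ⊢
  nlinarith

theorem sub_div_lt_of_lt_add_div (hj : 2 ≤ j) {n p : ℕ} (hp : p < n + n / (j - 1))
    (hsparse : p % j ≠ j - 1) : p - p / j < n := by
  obtain ⟨k, rfl⟩ : ∃ k, j = k + 2 := ⟨j - 2, by omega⟩
  have hp' := Nat.div_add_mod p (k + 2)
  have hn := Nat.div_add_mod n (k + 1)
  have hr : p % (k + 2) ≤ k := by have := Nat.mod_lt p (by omega : 0 < k + 2); omega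
  have hu : n % (k + 1) ≤ k := Nat.le_of_lt_succ (Nat.mod_lt n (by omega))
  rw [show k + 2 - 1 = k + 1 by omega] at hp
  generalize p / (k + 2) = a, p % (k + 2) = r, n / (k + 1) = q, n % (k + 1) = u at *
  subst hp' hn
  rw [Nat.sub_eq_of_eq_add (by ring : (k + 2) * a + r = (k + 1) * a + r + a)]
  rcases lt_or_ge a q with h | h <;> nlinarith

theorem div_lt_div_of_lt_add_div (hj : 2 ≤ j) {n p : ℕ} (hp : p < n + n / (j - 1))
    (hsparse : p % j = j - 1) : p / j < n / (j - 1) := by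
  obtain ⟨k, rfl⟩ : ∃ k, j = k + 2 := ⟨j - 2, by omega⟩
  have hp' := Nat.div_add_mod p (k + 2)
  have hn := Nat.div_add_mod n (k + 1)
  have hu : n % (k + 1) ≤ k := Nat.le_of_lt_succ (Nat.mod_lt n (by omega))
  rw [show k + 2 - 1 = k + 1 by omega] at hp hsparse ⊢
  generalize p / (k + 2) = a, p % (k + 2) = r, n / (k + 1) = q, n % (k + 1) = u at *
  subst hp' hn hsparse
  nlinarith

theorem seg_sparseJoin_congr (hj : 2 ≤ j) {X X' Y Y' : Cantor} {n : ℕ}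
    (hX : ∀ i < n, X i = X' i) (hY : ∀ i < n / (j - 1), Y i = Y' i) :
    seg (sparseJoin j X Y) (n + n / (j - 1)) = seg (sparseJoin j X' Y') (n + n / (j - 1)) := by
  refine seg_congr fun p hp => ?_
  by_cases hsparse : p % j = j - 1
  · rw [sparseJoin_apply_of_mod_eq hsparse, sparseJoin_apply_of_mod_eq hsparse,
      hY _ (div_lt_div_of_lt_add_div hj hp hsparse)]
  · rw [sparseJoin_apply_of_mod_ne hsparse, sparseJoin_apply_of_mod_ne hsparse,
      hX _ (sub_div_lt_of_lt_add_div hj hp hsparse)]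

theorem sparseJoin_apply_add_div (hj : 2 ≤ j) (X Y : Cantor) (n : ℕ) :
    sparseJoin j X Y (n + n / (j - 1)) = X n := by
  have hu : n % (j - 1) < j - 1 := Nat.mod_lt n (by omega)
  have hmod : (n + n / (j - 1)) % j = n % (j - 1) := by
    rw [add_div_pred_eq hj, Nat.mul_add_mod]
    exact Nat.mod_eq_of_lt (by omega)
  have hdiv : (n + n / (j - 1)) / j = n / (j - 1) := by
    rw [add_div_pred_eq hj, Nat.mul_add_div (by omega),
      Nat.div_eq_of_lt (show n % (j - 1) < j by omega), add_zero]
  rw [sparseJoin_apply_of_mod_ne (by omega), hdiv, Nat.add_sub_cancel]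

theorem sparseJoin_apply_add_div_add_one (hj : 2 ≤ j) (X Y : Cantor) {n : ℕ}
    (h : j - 1 ∣ n + 1) : sparseJoin j X Y (n + n / (j - 1) + 1) = Y (n / (j - 1)) := by
  have hn : n + 1 = (n / (j - 1) + 1) * (j - 1) := by
    rw [← Nat.succ_div_of_dvd h, Nat.div_mul_cancel h]
  have hpos : j * (n / (j - 1)) + (j - 1) = n + n / (j - 1) + 1 := by
    obtain ⟨k, rfl⟩ : ∃ k, j = k + 2 := ⟨j - 2, by omega⟩
    simp only [show k + 2 - 1 = k + 1 by omega] at hn ⊢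
    nlinarith
  rw [← hpos, sparseJoin_apply_sparse (by omega)]

end Positions

section Weave

variable {j : ℕ}

/-- The `X`-bits `σ` fill the first `|σ| + |σ| / (j - 1)` positions of `sparseJoin j X Y`, whose
`Y`-bits are then `τ`. -/
def weave (j : ℕ) (σ τ : List Bool) : List Bool :=
  seg (sparseJoin j (σ.getD · false) (τ.getD · false)) (σ.length + σ.length / (j - 1))

theorem seg_sparseJoin_mul (hj : 2 ≤ j) (X Y : Cantor) (t : ℕ) :
    seg (sparseJoin j X Y) (j * t) = weave j (seg X ((j - 1) * t)) (seg Y t) := by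
  have ht : (j - 1) * t / (j - 1) = t := Nat.mul_div_cancel_left t (by omega)
  have hlen : (j - 1) * t + t = j * t := by
    conv_rhs => rw [← Nat.sub_add_cancel (by omega : 1 ≤ j)]
    ring
  have h := seg_sparseJoin_congr hj (n := (j - 1) * t)
    (X' := fun i => (seg X ((j - 1) * t)).getD i false) (Y' := fun i => (seg Y t).getD i false)
    (fun i hi => (getD_seg hi).symm) (fun i hi => (getD_seg (ht ▸ hi)).symm)
  rw [ht, hlen] at h
  rw [weave, seg_length, ht, hlen]
  exact h

theorem weave_concat_of_not_dvd (hj : 2 ≤ j) {σ : List Bool} (τ : List Bool) (b : Bool)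
    (h : ¬j - 1 ∣ σ.length + 1) : weave j (σ ++ [b]) τ = weave j σ τ ++ [b] := by
  have hlen : σ.length + 1 + (σ.length + 1) / (j - 1) = σ.length + σ.length / (j - 1) + 1 := by
    rw [Nat.succ_div_of_not_dvd h]; omega
  rw [weave, weave, List.length_append, List.length_singleton, hlen, seg_succ,
    sparseJoin_apply_add_div hj, List.getD_append_right _ _ _ _ le_rfl, Nat.sub_self,
    seg_sparseJoin_congr hj (fun i hi => List.getD_append _ _ _ i hi) fun _ _ => rfl]
  rfl

theorem weave_concat_concat_of_dvd (hj : 2 ≤ j) {σ τ : List Bool} (b c : Bool)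
    (h : j - 1 ∣ σ.length + 1) (hτ : τ.length = σ.length / (j - 1)) :
    weave j (σ ++ [b]) (τ ++ [c]) = weave j σ τ ++ [b] ++ [c] := by
  have hlen :
      σ.length + 1 + (σ.length + 1) / (j - 1) = σ.length + σ.length / (j - 1) + 1 + 1 := by
    rw [Nat.succ_div_of_dvd h]; omega
  rw [weave, weave, List.length_append, List.length_singleton, hlen, seg_succ, seg_succ,
    sparseJoin_apply_add_div_add_one hj _ _ h, sparseJoin_apply_add_div hj,
    seg_sparseJoin_congr hj (fun i hi => List.getD_append _ _ _ i hi)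
      fun i hi => List.getD_append _ _ _ i (hτ ▸ hi),
    List.getD_append_right _ _ _ _ le_rfl, Nat.sub_self, ← hτ,
    List.getD_append_right _ _ _ _ le_rfl, Nat.sub_self]
  rfl

end Weave

section StringAvg

noncomputable def stringAvg : ℕ → (List Bool → ℝ) → ℝ
  | 0, f => f []
  | m + 1, f => stringAvg m fun τ => (f (τ ++ [false]) + f (τ ++ [true])) / 2

variable {m : ℕ} {f g : List Bool → ℝ}

theorem stringAvg_mono (h : ∀ τ, τ.length = m → f τ ≤ g τ) :
    stringAvg m f ≤ stringAvg m g := by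
  induction m generalizing f g with
  | zero => exact h [] rfl
  | succ m ih =>
    refine ih fun τ hτ => ?_
    have := h (τ ++ [false]) (by simp [hτ])
    have := h (τ ++ [true]) (by simp [hτ])
    linarith

theorem stringAvg_nonneg (hf : ∀ τ, 0 ≤ f τ) : 0 ≤ stringAvg m f := by
  induction m generalizing f with
  | zero => exact hf []
  | succ m ih =>
    exact ih fun τ => by have := hf (τ ++ [false]); have := hf (τ ++ [true]); positivity

theorem stringAvg_add : stringAvg m (fun τ => f τ + g τ) = stringAvg m f + stringAvg m g := by
  induction m generalizing f g with
  | zero => rfl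
  | succ m ih => rw [stringAvg, stringAvg, stringAvg, ← ih]; congr! 2; ring

theorem stringAvg_const_mul (c : ℝ) : stringAvg m (fun τ => c * f τ) = c * stringAvg m f := by
  induction m generalizing f with
  | zero => rfl
  | succ m ih => rw [stringAvg, stringAvg, ← ih]; congr! 2; ring

theorem le_pow_mul_stringAvg (hf : ∀ τ, 0 ≤ f τ) (τ : List Bool) :
    f τ ≤ 2 ^ τ.length * stringAvg τ.length f := by
  induction τ using List.reverseRecOn generalizing f with
  | nil => simp [stringAvg]
  | append_singleton τ b ih =>
    have hg : ∀ τ, 0 ≤ (f (τ ++ [false]) + f (τ ++ [true])) / 2 := fun τ => by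
      have := hf (τ ++ [false]); have := hf (τ ++ [true]); positivity
    have hb : f (τ ++ [b]) ≤ 2 * ((f (τ ++ [false]) + f (τ ++ [true])) / 2) := by
      cases b <;> linarith [hf (τ ++ [false]), hf (τ ++ [true])]
    calc f (τ ++ [b])
        ≤ 2 * (2 ^ τ.length *
          stringAvg τ.length fun τ => (f (τ ++ [false]) + f (τ ++ [true])) / 2) :=
          hb.trans (by gcongr; exact ih hg)
      _ = _ := by rw [List.length_append, List.length_singleton, stringAvg, pow_succ]; ring

end StringAvg

section SparseAvg

variable {j : ℕ} {d : List Bool → ℝ}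

theorem IsSupermartingale.concat_le (hd : IsSupermartingale d) (σ : List Bool) (b : Bool) :
    d (σ ++ [b]) ≤ 2 * d σ := by
  have := hd.2 σ
  cases b <;> linarith [hd.1 (σ ++ [false]), hd.1 (σ ++ [true])]

theorem IsSupermartingale.seg_le (hd : IsSupermartingale d) (X : Cantor) {m n : ℕ}
    (h : m ≤ n) : d (seg X n) ≤ 2 ^ (n - m) * d (seg X m) := by
  obtain ⟨k, rfl⟩ := Nat.exists_eq_add_of_le h
  rw [Nat.add_sub_cancel_left]
  induction k with
  | zero => simp
  | succ k ih =>
    calc d (seg X (m + (k + 1))) ≤ 2 * d (seg X (m + k)) := by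
          rw [← add_assoc, seg_succ]; exact hd.concat_le _ _
      _ ≤ 2 * (2 ^ k * d (seg X m)) := by gcongr; exact ih (Nat.le_add_right m k)
      _ = 2 ^ (k + 1) * d (seg X m) := by ring

/-- The supermartingale on `X`-strings betting like `d` on `sparseJoin j X Y`, averaged over the
unknown `Y`-bits. -/
noncomputable def sparseAvg (j : ℕ) (d : List Bool → ℝ) (σ : List Bool) : ℝ :=
  stringAvg (σ.length / (j - 1)) fun τ => d (weave j σ τ)

theorem sparseAvg_concat_le (hj : 2 ≤ j) (hd : IsSupermartingale d) (σ : List Bool) (b : Bool) :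
    sparseAvg j d (σ ++ [b]) ≤
      stringAvg (σ.length / (j - 1)) fun τ => d (weave j σ τ ++ [b]) := by
  rw [sparseAvg, List.length_append, List.length_singleton]
  by_cases h : j - 1 ∣ σ.length + 1
  · rw [Nat.succ_div_of_dvd h, stringAvg]
    refine stringAvg_mono fun τ hτ => ?_
    rw [weave_concat_concat_of_dvd hj b false h hτ, weave_concat_concat_of_dvd hj b true h hτ]
    linarith [hd.2 (weave j σ τ ++ [b])]
  · simp only [Nat.succ_div_of_not_dvd h, weave_concat_of_not_dvd hj _ b h, le_refl]

theorem isSupermartingale_sparseAvg (hj : 2 ≤ j) (hd : IsSupermartingale d) :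
    IsSupermartingale (sparseAvg j d) := by
  refine ⟨fun σ => stringAvg_nonneg fun τ => hd.1 _, fun σ => ?_⟩
  calc sparseAvg j d (σ ++ [false]) + sparseAvg j d (σ ++ [true])
      ≤ (stringAvg (σ.length / (j - 1)) fun τ => d (weave j σ τ ++ [false])) +
          stringAvg (σ.length / (j - 1)) fun τ => d (weave j σ τ ++ [true]) :=
        add_le_add (sparseAvg_concat_le hj hd σ false) (sparseAvg_concat_le hj hd σ true)
    _ ≤ stringAvg (σ.length / (j - 1)) fun τ => 2 * d (weave j σ τ) := by
        rw [← stringAvg_add]; exact stringAvg_mono fun τ _ => hd.2 _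
    _ = 2 * sparseAvg j d σ := stringAvg_const_mul 2

theorem le_pow_mul_sparseAvg (hj : 2 ≤ j) (hd : IsSupermartingale d) (X Y : Cantor) (t : ℕ) :
    d (seg (sparseJoin j X Y) (j * t)) ≤ 2 ^ t * sparseAvg j d (seg X ((j - 1) * t)) := by
  have ht : (seg X ((j - 1) * t)).length / (j - 1) = t := by
    rw [seg_length, Nat.mul_div_cancel_left t (by omega)]
  have h := le_pow_mul_stringAvg (fun τ => hd.1 (weave j (seg X ((j - 1) * t)) τ)) (seg Y t)
  rw [seg_length, ← seg_sparseJoin_mul hj] at h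
  rwa [sparseAvg, ht]

end SparseAvg

section Transfer

variable {j : ℕ} {d : List Bool → ℝ}

theorem two_rpow_mul_two_pow_le {s s' : ℝ} {t n : ℕ} (hj : 1 ≤ j) (hs : s ≤ 1)
    (hjs : s * j ≤ s' * (j - 1)) (hjt : j * t ≤ n) :
    (2 : ℝ) ^ ((1 - s') * ((j - 1) * t : ℕ)) * 2 ^ t ≤ 2 ^ ((1 - s) * n) := by
  rw [← Real.rpow_natCast 2 t, ← Real.rpow_add two_pos]
  refine Real.rpow_le_rpow_of_exponent_le one_le_two ?_
  have hjt' : (j : ℝ) * t ≤ n := by exact_mod_cast hjt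
  push_cast [Nat.cast_sub hj]
  nlinarith [mul_le_mul_of_nonneg_right hjs (Nat.cast_nonneg (α := ℝ) t),
    mul_le_mul_of_nonneg_left hjt' (sub_nonneg.2 hs)]

/-- The factor `2 ^ t` lost by averaging over `t` bits of `Y` is paid for by the gap
`s * j ≤ s' * (j - 1)` between the rates. -/
theorem succeeds_sparseAvg (hj : 2 ≤ j) (hd : IsSupermartingale d) {s s' : ℚ} (hs : s ≤ 1)
    (hjs : s * j ≤ s' * (j - 1)) {X Y : Cantor} (h : Succeeds d s (sparseJoin j X Y)) :
    Succeeds (sparseAvg j d) s' X := by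
  intro C
  obtain ⟨n, hn⟩ := h (max C 0 * 2 ^ j)
  set t := n / j
  have hjt : j * t ≤ n := Nat.mul_div_le n j
  have hrest : n - j * t ≤ j := by
    rw [← Nat.mod_eq_sub_mul_div]; exact (Nat.mod_lt n (by omega)).le
  refine ⟨(j - 1) * t, ?_⟩
  set E := sparseJoin j X Y
  set A := sparseAvg j d (seg X ((j - 1) * t))
  set a : ℝ := 2 ^ ((1 - (s' : ℝ)) * ((j - 1) * t : ℕ))
  have hexp : a * 2 ^ t ≤ 2 ^ ((1 - (s : ℝ)) * n) :=
    two_rpow_mul_two_pow_le (by omega) (by exact_mod_cast hs) (by exact_mod_cast hjs) hjt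
  have key : max C 0 * a * (2 ^ t * 2 ^ j) ≤ A * (2 ^ t * 2 ^ j) :=
    calc _ = max C 0 * 2 ^ j * (a * 2 ^ t) := by ring
      _ ≤ max C 0 * 2 ^ j * 2 ^ ((1 - (s : ℝ)) * n) := by gcongr
      _ ≤ 2 ^ (n - j * t) * d (seg E (j * t)) := hn.trans (hd.seg_le E hjt)
      _ ≤ 2 ^ j * (2 ^ t * A) := by
          gcongr
          exacts [hd.1 _, one_le_two, le_pow_mul_sparseAvg hj hd X Y t]
      _ = A * (2 ^ t * 2 ^ j) := by ring
  calc C * a ≤ max C 0 * a := by gcongr; exact le_max_left C 0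
    _ ≤ A := le_of_mul_le_mul_right key (by positivity)

theorem exists_two_le_and_mul_le {s s' : ℚ} (h : s < s') :
    ∃ j : ℕ, 2 ≤ j ∧ s * j ≤ s' * (j - 1) := by
  obtain ⟨k, hk⟩ := exists_nat_ge (s' / (s' - s))
  refine ⟨max k 2, le_max_right k 2, ?_⟩
  have hle : s' / (s' - s) ≤ (max k 2 : ℕ) := hk.trans (by exact_mod_cast le_max_left k 2)
  rw [div_le_iff₀ (sub_pos.2 h)] at hle
  linarith

end Transfer

section Dimension

theorem hausdorffDim_le_one (A : Set Cantor) : hausdorffDim A ≤ 1 :=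
  iInf_le_of_le (fun _ => false) (sInf_le (Or.inl rfl))

theorem hausdorffDim_le_of_succeeds {A : Set Cantor} {d : List Bool → ℝ}
    (hd : IsSupermartingale d) {s : ℚ} (hs0 : 0 ≤ s) (hs1 : s ≤ 1)
    (h : ∀ X ∈ A, Succeeds d s X) : hausdorffDim A ≤ ENNReal.ofReal s := by
  obtain ⟨Z, hZ⟩ := exists_lowerSemicomputableIn d
  exact iInf_le_of_le Z (sInf_le (Or.inr ⟨s, hs0, hs1, rfl, d, hd, hZ, h⟩))

theorem ENNReal.le_ofReal_of_forall_rat_gt {a : ℝ≥0∞} {x : ℝ} (hx : 0 ≤ x) (ha : a ≤ 1)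
    (h : ∀ q : ℚ, x < q → (q : ℝ) ≤ 1 → a ≤ ENNReal.ofReal q) :
    a ≤ ENNReal.ofReal x := by
  refine le_of_forall_gt_imp_ge_of_dense fun c hc => ?_
  rcases le_or_gt 1 c with hc1 | hc1
  · exact ha.trans hc1
  have hc_top : c ≠ ⊤ := (hc1.trans ENNReal.one_lt_top).ne
  obtain ⟨q, hxq, hqc⟩ := exists_rat_btwn ((ENNReal.ofReal_lt_iff_lt_toReal hx hc_top).1 hc)
  have hq1 : (q : ℝ) ≤ 1 :=
    hqc.le.trans (ENNReal.toReal_le_of_le_ofReal zero_le_one (by simpa using hc1.le))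
  exact (h q hxq hq1).trans (ENNReal.ofReal_le_of_le_toReal hqc.le)

variable {B : Set Cantor}

theorem MaximalAntichainDeg.hausdorffDim_minimalDeg_le_of_succeeds (hB : MaximalAntichainDeg B)
    {d : List Bool → ℝ} (hd : IsSupermartingale d) {s s' : ℚ}
    (h : ∀ X ∈ B, Succeeds d s X) (hs : 0 ≤ s) (hss' : s < s') (hs' : s' ≤ 1) :
    hausdorffDim {X | MinimalDeg X} ≤ ENNReal.ofReal s' := by
  obtain ⟨j, hj, hjs⟩ := exists_two_le_and_mul_le hss'
  refine hausdorffDim_le_of_succeeds (isSupermartingale_sparseAvg hj hd) (hs.trans hss'.le) hs'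
    fun X hX => ?_
  obtain ⟨Y, hY, hXY⟩ := hB.exists_tRed_of_minimalDeg hX
  exact succeeds_sparseAvg hj hd (hss'.le.trans hs') hjs
    (h _ (hB.1.sparseJoin_mem (by omega) hY hXY))

theorem MaximalAntichainDeg.hausdorffDim_minimalDeg_le (hB : MaximalAntichainDeg B) :
    hausdorffDim {X | MinimalDeg X} ≤ hausdorffDim B := by
  refine le_iInf fun Z => le_sInf ?_
  rintro x (rfl | ⟨s, hs0, -, rfl, d, hd, -, hsucc⟩)
  · exact hausdorffDim_le_one _
  · refine ENNReal.le_ofReal_of_forall_rat_gt (by exact_mod_cast hs0) (hausdorffDim_le_one _)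
      fun s' hss' hs' => hB.hausdorffDim_minimalDeg_le_of_succeeds hd hsucc hs0
        (by exact_mod_cast hss') (by exact_mod_cast hs')

end Dimension

theorem stmt16_general (r : ℝ≥0∞)
    (hmin : hausdorffDim {X : Cantor | MinimalDeg X} = r)
    (B : Set Cantor) (hB : MaximalAntichainDeg B) :
    r ≤ hausdorffDim B :=
  hmin ▸ hB.hausdorffDim_minimalDeg_le

/-- if the class of minimal-degree reals has Hausdorff dimension `r ≤ 1`, then
every maximal antichain of Turing degrees has Hausdorff dimension at least `r`. -/
theorem stmt16 (r : ℝ≥0∞) (hr1 : r ≤ 1)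
    (hmin : hausdorffDim {X : Cantor | MinimalDeg X} = r)
    (B : Set Cantor) (hB : MaximalAntichainDeg B) :
    r ≤ hausdorffDim B :=
  stmt16_general r hmin B hB
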